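/- Let X be a complete maximally almost periodic abelian topological group with the SB-property. Then X respects compactness (a subset of X is compact in X if and only if it is compact in X⁺), and X⁺ is a μ-space: every subset of X functionally bounded in X⁺ has compact closure in X⁺ (indeed its closure in X is compact in X). -/

import Mathlib

open Filter Topology Set Pointwise

/-- The weak (Bohr) topology `σ(X, X̂)` on an abelian topological group `X`: the coarsest
topology making all continuous characters `X → 𝕋 = ℝ/ℤ` continuous. -/
noncomputable def weakTopology (X : Type*) [AddCommGroup X] [TopologicalSpace X] :
    TopologicalSpace X :=
  ⨅ (χ : X →+ UnitAddCircle) (_ : Continuous χ), TopologicalSpace.induced χ inferInstance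

/-- An abelian topological group is maximally almost periodic (MAP) if its continuous
characters separate its points. -/
def MAPGroup (X : Type*) [AddCommGroup X] [TopologicalSpace X] : Prop :=
  ∀ x : X, x ≠ 0 → ∃ χ : X →+ UnitAddCircle, Continuous χ ∧ χ x ≠ 0

/-- A subset `E` of a set carrying a topology `t` is functionally bounded if every
`t`-continuous real-valued function is bounded on `E`. -/
def FunctionallyBoundedIn {Y : Type*} (t : TopologicalSpace Y) (E : Set Y) : Prop :=
  ∀ f : Y → ℝ, @Continuous Y ℝ t _ f → Bornology.IsBounded (f '' E)

/-- An abelian topological group is complete (with respect to its group uniformity) if every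
nontrivial Cauchy filter converges. -/
def GroupComplete (X : Type*) [AddCommGroup X] [TopologicalSpace X] : Prop :=
  ∀ F : Filter X, F.NeBot →
    (∀ V ∈ 𝓝 (0 : X), ∃ S ∈ F, ∀ x ∈ S, ∀ y ∈ S, y - x ∈ V) →
    ∃ x : X, F ≤ 𝓝 x

/-!
A set `E` functionally bounded in `X⁺` is totally bounded in `X`: otherwise there are `W ∈ 𝓝 0`
and a sequence `u` in `E` with `u n - u m ∉ W` for `m < n`. Translates of a small neighbourhood
of `0` along `u` then form a discrete family, and a sum of bump functions on them is a continuous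
`f` with `f (u n) = n`, contradicting the SB-property. By completeness `closure E` is compact.
Since `X⁺` is Hausdorff (MAP) and coarser than `X`, compactness in `X` and in `X⁺` then agree.
-/

section FunctionallyBounded

variable {Y : Type*} {t : TopologicalSpace Y}

theorem FunctionallyBoundedIn.mono {E F : Set Y} (hF : FunctionallyBoundedIn t F) (h : E ⊆ F) :
    FunctionallyBoundedIn t E :=
  fun f hf => (hF f hf).subset (image_mono h)

theorem IsCompact.functionallyBoundedIn {K : Set Y} (hK : @IsCompact Y t K) :
    FunctionallyBoundedIn t K :=
  fun _ hf => (hK.image hf).isBounded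

theorem not_functionallyBoundedIn_range {u : ℕ → Y} {f : Y → ℝ} (hf : Continuous[t, _] f)
    (hfu : ∀ n, f (u n) = n) : ¬ FunctionallyBoundedIn t (range u) := by
  intro hu
  obtain ⟨C, hC⟩ := (hu f hf).bddAbove
  obtain ⟨n, hn⟩ := exists_nat_gt C
  have : (n : ℝ) ≤ C := hC ⟨u n, mem_range_self n, hfu n⟩
  linarith

end FunctionallyBounded

section TwoTopologies

variable {X : Type*} {t₁ t₂ : TopologicalSpace X}

theorem IsCompact.of_le_topology (h : t₁ ≤ t₂) {K : Set X} (hK : @IsCompact X t₁ K) :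
    @IsCompact X t₂ K :=
  image_id K ▸ @IsCompact.image X X t₁ t₂ K id hK (continuous_id_of_le h)

theorem isCompact_iff_of_le_topology [@T2Space X t₂] (h : t₁ ≤ t₂)
    (hcl : ∀ K, @IsCompact X t₂ K → @IsCompact X t₁ (closure[t₁] K)) (K : Set X) :
    @IsCompact X t₁ K ↔ @IsCompact X t₂ K := by
  refine ⟨IsCompact.of_le_topology h, fun hK => ?_⟩
  have hclosed : IsClosed[t₁] K := (@IsCompact.isClosed X t₂ _ K hK).mono h
  exact @IsCompact.of_isClosed_subset X t₁ _ _ (hcl K hK) hclosed (@subset_closure X t₁ K)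

theorem isCompact_closure_of_le_topology [@T2Space X t₂] (h : t₁ ≤ t₂) {E : Set X}
    (hE : @IsCompact X t₁ (closure[t₁] E)) : @IsCompact X t₂ (closure[t₂] E) := by
  have hE₂ : @IsCompact X t₂ (closure[t₁] E) := hE.of_le_topology h
  exact @IsCompact.of_isClosed_subset X t₂ _ _ hE₂ (@isClosed_closure X t₂ E)
    (@closure_minimal X t₂ _ _ (@subset_closure X t₁ E) (@IsCompact.isClosed X t₂ _ _ hE₂))

end TwoTopologies

section WeakTopology

variable {X : Type*} [AddCommGroup X] [TopologicalSpace X]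

theorem le_weakTopology : ‹TopologicalSpace X› ≤ weakTopology X :=
  le_iInf₂ fun _ hχ => continuous_iff_le_induced.mp hχ

theorem continuous_weakTopology {χ : X →+ UnitAddCircle} (hχ : Continuous χ) :
    Continuous[weakTopology X, _] χ :=
  continuous_iff_le_induced.mpr (iInf₂_le χ hχ)

theorem t2Space_weakTopology (hMAP : MAPGroup X) : @T2Space X (weakTopology X) := by
  refine @t2Space_iff X (weakTopology X) |>.mpr fun x y hxy => ?_
  obtain ⟨χ, hχ, hχxy⟩ := hMAP (x - y) (sub_ne_zero.mpr hxy)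
  exact @separated_by_continuous X _ (weakTopology X) _ _ _ (continuous_weakTopology hχ) x y
    fun h => hχxy (by simp [h])

end WeakTopology

theorem exists_continuous_eq_natCast_of_locallyFinite {Y : Type*} [TopologicalSpace Y]
    [CompletelyRegularSpace Y] {U : ℕ → Set Y} (hU : LocallyFinite U)
    (hdisj : Pairwise fun i j => Disjoint (U i) (U j)) {x : ℕ → Y} (hx : ∀ n, U n ∈ 𝓝 (x n)) :
    ∃ f : Y → ℝ, Continuous f ∧ ∀ n, f (x n) = n := by
  have hbump : ∀ n, ∃ g : Y → ℝ, Continuous g ∧ g (x n) = n ∧ Function.support g ⊆ U n := by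
    intro n
    obtain ⟨g, hg, hgx, hgK⟩ := CompletelyRegularSpace.completely_regular (x n) (interior (U n))ᶜ
      isOpen_interior.isClosed_compl (not_not.mpr (mem_interior_iff_mem_nhds.mpr (hx n)))
    refine ⟨fun y => n * (1 - g y), by fun_prop, by simp [hgx], fun y hy => ?_⟩
    by_contra hyU
    exact hy (by simp [hgK (fun h => hyU (interior_subset h))])
  choose g hg hgx hgU using hbump
  refine ⟨fun y => ∑ᶠ n, g n y, continuous_finsum hg (hU.subset hgU), fun n => ?_⟩
  show ∑ᶠ m, g m (x n) = n
  rw [finsum_eq_single _ n fun m hmn => ?_, hgx]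
  exact Function.notMem_support.mp fun h =>
    (hdisj hmn).notMem_of_mem_right (mem_of_mem_nhds (hx n)) (hgU m h)

theorem exists_continuous_eq_natCast_of_sub_notMem {X : Type*} [AddCommGroup X]
    [TopologicalSpace X] [IsTopologicalAddGroup X] {W : Set X} (hW : W ∈ 𝓝 0) {u : ℕ → X}
    (hu : ∀ m n, m < n → u n - u m ∉ W) : ∃ f : X → ℝ, Continuous f ∧ ∀ n, f (u n) = n := by
  let := IsTopologicalAddGroup.rightUniformSpace X
  obtain ⟨V₁, hV₁, hV₁W⟩ := exists_nhds_half_neg hW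
  obtain ⟨V, hV, hVV₁⟩ := exists_nhds_half_neg hV₁
  let U : X → Set X := fun a => {y | y - a ∈ V}
  have hU : ∀ a, U a ∈ 𝓝 a := fun a =>
    (continuous_id.sub continuous_const).continuousAt.preimage_mem_nhds (by simpa using hV)
  have hclose : ∀ x i j, (U (u i) ∩ U x).Nonempty → (U (u j) ∩ U x).Nonempty →
      u i - u j ∈ W := by
    rintro x i j ⟨y, hyi, hyx⟩ ⟨z, hzj, hzx⟩
    have := hV₁W _ (hVV₁ _ hyx _ hyi) _ (hVV₁ _ hzx _ hzj)
    rwa [show y - x - (y - u i) - (z - x - (z - u j)) = u i - u j by abel] at this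
  have hsub : ∀ x, {i | (U (u i) ∩ U x).Nonempty}.Subsingleton := by
    intro x i hi j hj
    by_contra hij
    rcases lt_or_gt_of_ne hij with h | h
    · exact hu i j h (hclose x j i hj hi)
    · exact hu j i h (hclose x i j hi hj)
  refine exists_continuous_eq_natCast_of_locallyFinite (U := U ∘ u)
    (fun x => ⟨U x, hU x, (hsub x).finite⟩) (fun i j hij => ?_) (fun n => hU (u n))
  refine Set.disjoint_left.mpr fun z hzi hzj => hij (hsub z ?_ ?_)
  · exact ⟨z, hzi, mem_of_mem_nhds (hU z)⟩
  · exact ⟨z, hzj, mem_of_mem_nhds (hU z)⟩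

section UniformAddGroup

variable {X : Type*} [UniformSpace X] [AddCommGroup X] [IsUniformAddGroup X]

theorem exists_seq_sub_notMem_of_not_totallyBounded {E : Set X} (hE : ¬ TotallyBounded E) :
    ∃ W ∈ 𝓝 (0 : X), ∃ u : ℕ → X, (∀ n, u n ∈ E) ∧ ∀ m n, m < n → u n - u m ∉ W := by
  simp only [totallyBounded_iff_subset_finite_iUnion_nhds_zero, not_forall, not_exists,
    not_and] at hE
  obtain ⟨W, hW, hcover⟩ := hE
  refine ⟨W, hW, exists_seq_of_forall_finset_exists (· ∈ E) (fun a b => b - a ∉ W)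
    fun s _ => ?_⟩
  obtain ⟨y, hyE, hy⟩ := not_subset.mp (hcover s s.finite_toSet)
  exact ⟨y, hyE, fun a ha hya => hy (mem_biUnion ha ⟨y - a, hya, add_sub_cancel a y⟩)⟩

theorem totallyBounded_of_forall_seq_functionallyBoundedIn {E : Set X}
    (hE : ∀ u : ℕ → X, (∀ n, u n ∈ E) → FunctionallyBoundedIn inferInstance (range u)) :
    TotallyBounded E := by
  by_contra hTB
  obtain ⟨W, hW, u, huE, hu⟩ := exists_seq_sub_notMem_of_not_totallyBounded hTB
  obtain ⟨f, hf, hfu⟩ := exists_continuous_eq_natCast_of_sub_notMem hW hu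
  exact not_functionallyBoundedIn_range hf hfu (hE u huE)

theorem completeSpace_of_groupComplete (h : GroupComplete X) : CompleteSpace X where
  complete hF :=
    h _ hF.1 ((𝓝 (0 : X)).basis_sets.uniformity_of_nhds_zero.cauchy_iff.mp hF).2

end UniformAddGroup

/-- Let `X` be a complete maximally almost periodic abelian topological group with the
SB-property (every sequence in `X` functionally bounded in `X⁺` is functionally bounded in
`X`). Then `X` respects compactness (a subset of `X` is compact in `X` if and only if it is
compact in `X⁺`), and `X⁺` is a μ-space: every subset of `X` functionally bounded in `X⁺`
has compact closure in `X⁺`; indeed its closure in `X` is compact in `X`. -/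
theorem respects_compactness_and_mu_of_SB {X : Type*} [AddCommGroup X]
    [TopologicalSpace X] [IsTopologicalAddGroup X] (hMAP : MAPGroup X)
    (hcomplete : GroupComplete X)
    (hSB : ∀ u : ℕ → X, FunctionallyBoundedIn (weakTopology X) (Set.range u) →
      FunctionallyBoundedIn ‹TopologicalSpace X› (Set.range u)) :
    (∀ K : Set X, IsCompact K ↔ @IsCompact X (weakTopology X) K) ∧
      (∀ E : Set X, FunctionallyBoundedIn (weakTopology X) E →
        @IsCompact X (weakTopology X) (@closure X (weakTopology X) E) ∧
          IsCompact (closure E)) := by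
  let := IsTopologicalAddGroup.rightUniformSpace X
  have := isUniformAddGroup_of_addCommGroup (G := X)
  have := completeSpace_of_groupComplete hcomplete
  have := t2Space_weakTopology hMAP
  have hmu : ∀ E, FunctionallyBoundedIn (weakTopology X) E → IsCompact (closure E) :=
    fun E hE => (totallyBounded_of_forall_seq_functionallyBoundedIn fun u hu =>
      hSB u (hE.mono (range_subset_iff.mpr hu))).closure.isCompact_of_isClosed isClosed_closure
  exact ⟨isCompact_iff_of_le_topology le_weakTopology fun K hK =>
      hmu K hK.functionallyBoundedIn,
    fun E hE => ⟨isCompact_closure_of_le_topology le_weakTopology (hmu E hE), hmu E hE⟩⟩
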